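/- (Generalized fractional Black–Scholes formula.) Let H ∈ (0,1), σ > 0, r ∈ ℝ, T > 0, E > 0, S₀ > 0, and a, b ∈ ℝ with κ := (a+b)² − 2^{2H}·a·b > 0. Set v := σ²κT^{2H}, x₀ := ln S₀, and let p(x) = (2πv)^{−1/2}·exp(−(x − x₀ + v/2)²/(2v)). Then the discounted expected call payoff satisfies e^{−rT}·∫_{ℝ} max(e^{x + rT} − E, 0)·p(x) dx = S₀·N(d₁) − E·e^{−rT}·N(d₂), where N is the standard normal cumulative distribution function, d₁ = (ln(S₀/E) + rT + (1/2)v)/√v and d₂ = (ln(S₀/E) + rT − (1/2)v)/√v. -/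

import Mathlib

/-!
Write `S_T = e^{rT} e^{X}` with `X ~ 𝒩(μ, v)`, `μ = ln S₀ - v/2`. The call pays only on `X > ln K`
with `K = E e^{-rT}`. There `e^{X}` times the density of `𝒩(μ, v)` is `e^{μ + v/2} = S₀` times the
density of `𝒩(μ + v, v)` (completing the square), and the tail mass of `𝒩(m, v)` beyond `ln K`
is `N((m - ln K)/√v)`.
-/

open Real MeasureTheory

/-- The standard normal cumulative distribution function. -/
noncomputable def stdNormalCDF (z : ℝ) : ℝ :=
  ∫ x in Set.Iic z, Real.exp (-x ^ 2 / 2) / Real.sqrt (2 * π)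

open Set

noncomputable def gaussianDensity (μ v x : ℝ) : ℝ :=
  (2 * π * v) ^ (-(1 : ℝ) / 2) * exp (-(x - μ) ^ 2 / (2 * v))

lemma integral_Ioi_comp_sub_right {F : Type*} [NormedAddCommGroup F] [NormedSpace ℝ F]
    (f : ℝ → F) (a c : ℝ) :
    ∫ x in Ioi a, f (x - c) = ∫ x in Ioi (a - c), f x := by
  have h := (measurePreserving_sub_right volume c).setIntegral_preimage_emb
    (MeasurableEquiv.subRight c).measurableEmbedding f (Ioi (a - c))
  rwa [preimage_sub_const_Ioi, sub_add_cancel] at h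

section GaussianDensity

variable {v : ℝ}

lemma integrable_gaussianDensity (hv : 0 < v) (μ : ℝ) : Integrable (gaussianDensity μ v) := by
  have h := ((integrable_exp_neg_mul_sq (b := (2 * v)⁻¹) (by positivity)).comp_sub_right μ).const_mul
    ((2 * π * v) ^ (-(1 : ℝ) / 2))
  convert h using 2 with x
  simp only [gaussianDensity]
  congr 2
  ring

lemma gaussianDensity_eq_standardized (hv : 0 < v) (μ x : ℝ) :
    gaussianDensity μ v x = (√v * √(2 * π))⁻¹ * exp (-((√v)⁻¹ * (x - μ)) ^ 2 / 2) := by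
  have hs : √v ^ 2 = v := sq_sqrt hv.le
  rw [gaussianDensity, neg_div, rpow_neg (by positivity), ← sqrt_eq_rpow, mul_comm (2 * π),
    sqrt_mul hv.le, mul_pow, inv_pow, hs]
  field_simp

lemma integral_Ioi_gaussianDensity (hv : 0 < v) (μ L : ℝ) :
    ∫ x in Ioi L, gaussianDensity μ v x = stdNormalCDF ((μ - L) / √v) := by
  have hs : 0 < √v := sqrt_pos.mpr hv
  have hflip := integral_comp_neg_Ioi ((√v)⁻¹ * (L - μ)) (fun y : ℝ => exp (-y ^ 2 / 2))
  simp only [neg_sq] at hflip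
  simp_rw [gaussianDensity_eq_standardized hv]
  rw [integral_const_mul, integral_Ioi_comp_sub_right (fun y => exp (-((√v)⁻¹ * y) ^ 2 / 2)),
    integral_comp_mul_left_Ioi (fun y => exp (-y ^ 2 / 2)) _ (inv_pos.mpr hs), inv_inv,
    smul_eq_mul, hflip, stdNormalCDF, integral_div,
    show -((√v)⁻¹ * (L - μ)) = (μ - L) / √v by field_simp; ring]
  have : 0 < √(2 * π) := sqrt_pos.mpr (by positivity)
  field_simp

lemma exp_mul_gaussianDensity (hv : v ≠ 0) (μ x : ℝ) :
    exp x * gaussianDensity μ v x = exp (μ + v / 2) * gaussianDensity (μ + v) v x := by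
  simp only [gaussianDensity]
  rw [mul_left_comm, ← exp_add, mul_left_comm (exp _), ← exp_add]
  congr 2
  field_simp
  ring

theorem integral_max_exp_sub_mul_gaussianDensity (hv : 0 < v) (μ : ℝ) {K : ℝ} (hK : 0 < K) :
    ∫ x, max (exp x - K) 0 * gaussianDensity μ v x =
      exp (μ + v / 2) * stdNormalCDF ((μ + v - log K) / √v)
        - K * stdNormalCDF ((μ - log K) / √v) := by
  have hvanish : ∀ x ∉ Ioi (log K), max (exp x - K) 0 * gaussianDensity μ v x = 0 := by
    intro x hx
    rw [max_eq_right, zero_mul]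
    rw [sub_nonpos, ← exp_log hK]
    exact exp_le_exp.mpr (not_lt.mp hx)
  have hsplit : ∀ x ∈ Ioi (log K), max (exp x - K) 0 * gaussianDensity μ v x =
      exp (μ + v / 2) * gaussianDensity (μ + v) v x - K * gaussianDensity μ v x := by
    intro x hx
    rw [max_eq_left, sub_mul, exp_mul_gaussianDensity hv.ne']
    rw [sub_nonneg, ← exp_log hK]
    exact exp_le_exp.mpr hx.le
  rw [← setIntegral_eq_integral_of_forall_compl_eq_zero hvanish,
    setIntegral_congr_fun measurableSet_Ioi hsplit,
    integral_sub ((integrable_gaussianDensity hv _).const_mul _).integrableOn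
      ((integrable_gaussianDensity hv _).const_mul _).integrableOn,
    integral_const_mul, integral_const_mul, integral_Ioi_gaussianDensity hv,
    integral_Ioi_gaussianDensity hv]

end GaussianDensity

theorem gfbm_black_scholes_formula
    (H : ℝ)
    (σ : ℝ) (hσ : 0 < σ) (r : ℝ) (T : ℝ) (hT : 0 < T)
    (E : ℝ) (hE : 0 < E) (S₀ : ℝ) (hS₀ : 0 < S₀)
    (κ : ℝ) (hκ : 0 < κ)
    (v : ℝ) (hv : v = σ ^ 2 * κ * T ^ (2 * H))
    (x₀ : ℝ) (hx₀ : x₀ = Real.log S₀)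
    (p : ℝ → ℝ)
    (hp : ∀ x : ℝ, p x = (2 * π * v) ^ (-(1 : ℝ) / 2) *
      Real.exp (-(x - x₀ + v / 2) ^ 2 / (2 * v))) :
    Real.exp (-(r * T)) * ∫ x : ℝ, max (Real.exp (x + r * T) - E) 0 * p x
      = S₀ * stdNormalCDF ((Real.log (S₀ / E) + r * T + (1 / 2) * v) / Real.sqrt v)
        - E * Real.exp (-(r * T)) *
          stdNormalCDF ((Real.log (S₀ / E) + r * T - (1 / 2) * v) / Real.sqrt v) := by
  have hv_pos : 0 < v := by
    have hTH := rpow_pos_of_pos hT (2 * H)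
    rw [hv]
    positivity
  have hp_eq : p = gaussianDensity (x₀ - v / 2) v := funext fun x => by
    rw [hp, gaussianDensity, sub_sub_eq_add_sub, add_sub_right_comm]
  have hpayoff : ∀ x, max (exp (x + r * T) - E) 0 =
      exp (r * T) * max (exp x - E * exp (-(r * T))) 0 := fun x => by
    rw [mul_max_of_nonneg _ _ (exp_pos _).le, mul_zero, mul_sub, ← exp_add, mul_left_comm,
      ← exp_add, add_neg_cancel, exp_zero, mul_one, add_comm]
  have hlogK : log (E * exp (-(r * T))) = log E - r * T := by
    rw [log_mul hE.ne' (exp_pos _).ne', log_exp, sub_eq_add_neg]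
  simp_rw [hpayoff, mul_assoc, integral_const_mul, hp_eq]
  rw [integral_max_exp_sub_mul_gaussianDensity hv_pos _ (by positivity), sub_add_cancel, hx₀,
    exp_log hS₀, hlogK, log_div hS₀.ne' hE.ne', ← mul_assoc, ← exp_add, neg_add_cancel, exp_zero,
    one_mul]
  ring_nf
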